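/- For every nonempty finite linearly ordered set I, the canonical adjunction map I → I** is an isomorphism of ordered sets, where I* = Hom_{Δ_big}(I,{0,1}) with pointwise order and I** = Hom_{∇}(I*,{0,1}) (nondecreasing maps preserving min and max), the map sending i ∈ I to evaluation at i. -/

import Mathlib

/-!
STATEMENT 1: For every nonempty finite linearly ordered set `I`, the canonical
map `I → I**` is an isomorphism of ordered sets, where `I* = Hom_{Δ_big}(I, {0,1})`
(nondecreasing maps into `Fin 2`, ordered pointwise; its minimal element is the
constant-`0` map and its maximal element is the constant-`1` map) and
`I** = Hom_∇(I*, {0,1})` (nondecreasing maps preserving min and max).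
The canonical map sends `i` to evaluation at `i`.
-/

open OrderHom

/-- The constant `0` map, the minimal element of `I* = I →o Fin 2`. -/
def constZero (I : Type*) [Preorder I] : I →o Fin 2 := ⟨fun _ => 0, monotone_const⟩

/-- The constant `1` map, the maximal element of `I* = I →o Fin 2`. -/
def constOne (I : Type*) [Preorder I] : I →o Fin 2 := ⟨fun _ => 1, monotone_const⟩

/-- `I** `: nondecreasing maps `I* → Fin 2` preserving the minimal and maximal
elements (which are the constant maps `0` and `1`). -/
def DoubleStar (I : Type*) [Preorder I] : Type _ :=
  {g : (I →o Fin 2) → Fin 2 //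
    Monotone g ∧ g (constZero I) = 0 ∧ g (constOne I) = 1}

instance (I : Type*) [Preorder I] : Preorder (DoubleStar I) :=
  Subtype.preorder _

/-- The canonical map `I → I**`, sending `i` to evaluation at `i`. -/
def evalMap (I : Type*) [Preorder I] (i : I) : DoubleStar I :=
  ⟨fun f => f i, fun _ _ h => h i, rfl, rfl⟩

/-!
A nondecreasing `f : I → Fin 2` is determined by the up-set `f⁻¹(1)`, which in a finite chain
is empty or a ray `[m, ∞)`: so `f` is `0` or `threshold m`, and `threshold i ≤ f ↔ f i = 1`.
Evaluating at `threshold i` shows that `evalMap` reflects the order. For `g ∈ I**` let `i` be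
greatest with `g (threshold i) = 1`; it exists since `g` separates the constants `0` and `1`.
If `f i = 1` then `threshold i ≤ f`, so `g f = 1`; if `f i = 0` then `f` is `0` or
`threshold m` with `i < m`, so `g f = 0` by the maximality of `i`.
-/

section Threshold

variable {I : Type*} [LinearOrder I]

def threshold (i : I) : I →o Fin 2 :=
  ⟨fun x => if i ≤ x then 1 else 0, fun x y hxy => by
    by_cases hx : i ≤ x
    · simp [hx, hx.trans hxy]
    · simp [hx]⟩

lemma threshold_apply (i x : I) : threshold i x = if i ≤ x then 1 else 0 := rfl

lemma threshold_apply_eq_one {i x : I} : threshold i x = 1 ↔ i ≤ x := by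
  by_cases h : i ≤ x <;> simp [threshold_apply, h]

lemma threshold_le_iff {i : I} {f : I →o Fin 2} : threshold i ≤ f ↔ f i = 1 := by
  refine ⟨fun h => ?_, fun hf x => ?_⟩
  · have hi : threshold i i ≤ f i := h i
    rw [threshold_apply_eq_one.2 le_rfl] at hi
    omega
  · by_cases hx : i ≤ x
    · rw [threshold_apply, if_pos hx, ← hf]
      exact f.monotone hx
    · rw [threshold_apply, if_neg hx]
      exact Fin.zero_le _

lemma eq_constZero_or_exists_eq_threshold [WellFoundedLT I] (f : I →o Fin 2) :
    f = constZero I ∨ ∃ m, f = threshold m := by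
  by_cases hne : {x | f x = 1}.Nonempty
  · obtain ⟨m, hm, hmin⟩ := wellFounded_lt.has_min _ hne
    refine Or.inr ⟨m, OrderHom.ext _ _ (funext fun x => ?_)⟩
    by_cases hmx : m ≤ x
    · have hfx : f m ≤ f x := f.monotone hmx
      rw [show f m = 1 from hm] at hfx
      rw [threshold_apply_eq_one.2 hmx]
      omega
    · have hx : f x ≠ 1 := fun hx => hmin x hx (not_le.1 hmx)
      rw [threshold_apply, if_neg hmx]
      omega
  · refine Or.inl (OrderHom.ext _ _ (funext fun x => ?_))
    have hx : f x ≠ 1 := fun hx => hne ⟨x, hx⟩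
    simp only [constZero, OrderHom.coe_mk]
    omega

end Threshold

section EvalMap

variable (I : Type*) [LinearOrder I]

lemma evalMap_le_evalMap_iff {i j : I} : evalMap I i ≤ evalMap I j ↔ i ≤ j := by
  refine ⟨fun h => ?_, fun h f => f.monotone h⟩
  have hij : threshold i i ≤ threshold i j := h (threshold i)
  rw [threshold_apply_eq_one.2 le_rfl] at hij
  exact threshold_apply_eq_one.1 (by omega)

lemma evalMap_injective : Function.Injective (evalMap I) := fun _ _ h =>
  le_antisymm ((evalMap_le_evalMap_iff I).1 h.le) ((evalMap_le_evalMap_iff I).1 h.ge)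

lemma evalMap_eq_of_isGreatest [WellFoundedLT I] {g : DoubleStar I} {i : I}
    (hi : IsGreatest {j | g.1 (threshold j) = 1} i) : evalMap I i = g := by
  obtain ⟨hgi, hmax⟩ := hi
  refine Subtype.ext (funext fun f => ?_)
  change f i = g.1 f
  by_cases hfi : f i = 1
  · have hgf : g.1 (threshold i) ≤ g.1 f := g.2.1 (threshold_le_iff.2 hfi)
    rw [show g.1 (threshold i) = 1 from hgi] at hgf
    omega
  · have hgf : g.1 f ≠ 1 := by
      rcases eq_constZero_or_exists_eq_threshold f with rfl | ⟨m, rfl⟩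
      · simp [g.2.2.1]
      · exact fun hm => hfi (threshold_apply_eq_one.2 (hmax hm))
    omega

lemma evalMap_surjective [Finite I] : Function.Surjective (evalMap I) := fun g => by
  have hne : {j | g.1 (threshold j) = 1}.Nonempty := by
    obtain ⟨-, hg0, hg1⟩ := g.2
    rcases eq_constZero_or_exists_eq_threshold (constOne I) with h | ⟨m, h⟩
    · exact absurd (hg1.symm.trans ((congrArg g.1 h).trans hg0)) one_ne_zero
    · exact ⟨m, (congrArg g.1 h).symm.trans hg1⟩
  obtain ⟨i, hi, hmax⟩ := Set.exists_max_image _ _root_.id (Set.toFinite _) hne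
  exact ⟨i, evalMap_eq_of_isGreatest I ⟨hi, hmax⟩⟩

end EvalMap

theorem evalMap_isOrderIso_general (I : Type*) [LinearOrder I] [Fintype I] :
    Function.Bijective (evalMap I) ∧ ∀ i j : I, i ≤ j ↔ evalMap I i ≤ evalMap I j :=
  ⟨⟨evalMap_injective I, evalMap_surjective I⟩, fun _ _ => (evalMap_le_evalMap_iff I).symm⟩

theorem evalMap_isOrderIso (I : Type*) [LinearOrder I] [Fintype I] [Nonempty I] :
    Function.Bijective (evalMap I) ∧ ∀ i j : I, i ≤ j ↔ evalMap I i ≤ evalMap I j :=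
  evalMap_isOrderIso_general I
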